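/- arXiv:1504.03644 — 2 statements merged into one kernel-verified Lean document; each statement's English description precedes it below -/
import Mathlib

section
/- Comparison of the two outer measures: For every set A ⊆ Ω^qv one has P̄(A) ≤ Q̄(A). -/
open MeasureTheory ProbabilityTheory Filter Topology Set
open scoped ENNReal NNReal Classical

noncomputable section

/-- The space of continuous paths on `[0,∞)` started at `0`, modeled as continuous
functions on `ℝ` which vanish on `(-∞,0]`, endowed with the topology of locally
uniform convergence and its Borel σ-algebra. -/
def PathSpace : Type := {ω : ℝ → ℝ // Continuous ω ∧ ∀ t ≤ 0, ω t = 0}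

instance : TopologicalSpace PathSpace :=
  TopologicalSpace.induced (fun ω : PathSpace => (⟨ω.1, ω.2.1⟩ : C(ℝ, ℝ))) inferInstance

instance : MeasurableSpace PathSpace := borel PathSpace
instance : BorelSpace PathSpace := ⟨rfl⟩

namespace RF

/-- The coordinate (canonical) process. -/
def eval (t : ℝ) (ω : PathSpace) : ℝ := ω.1 t

/-- The natural (raw) filtration generated by the coordinate process. -/
def natFilt (t : ℝ) : MeasurableSpace PathSpace :=
  ⨆ (s : ℝ) (_ : s ≤ t), MeasurableSpace.comap (eval s) inferInstance

/-- The path `ω` stopped at time `t`. -/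
def stoppedPath (ω : PathSpace) (t : ℝ) : PathSpace :=
  ⟨fun s => ω.1 (min s t), ω.2.1.comp (continuous_id.min continuous_const),
    fun s hs => ω.2.2 _ (le_trans (min_le_left _ _) hs)⟩

/-- Concatenation: follow `ω` up to time `t`, then continue with the increments of `ω'`. -/
def concat (ω : PathSpace) (t : ℝ) (ω' : PathSpace) : PathSpace :=
  ⟨fun r => if r ≤ max t 0 then ω.1 r else ω.1 (max t 0) + ω'.1 (r - max t 0), by
    constructor
    · refine Continuous.if_le ω.2.1 ?_ continuous_id continuous_const ?_
      · exact continuous_const.add (ω'.2.1.comp (continuous_id.sub continuous_const))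
      · intro x hx; rw [hx, sub_self, ω'.2.2 0 le_rfl, add_zero]
    · intro r hr
      have h1 : r ≤ max t 0 := le_trans hr (le_max_right t 0)
      simp only [h1, if_true]
      exact ω.2.2 r hr⟩

/-- The "concatenation version" of the conditional expectation
`E_W[X | F_t](ω) = ∫ X((ω↾[0,t]) ⊕ ω') W(dω')`. -/
def condExpW (W : Measure PathSpace) (X : PathSpace → ℝ) (t : ℝ) (ω : PathSpace) : ℝ :=
  ∫ ω', X (concat ω t ω') ∂W

/-- `W` is the Wiener measure: a probability measure under which the coordinate process
has independent centered Gaussian increments. -/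
def IsWienerMeasure (W : Measure PathSpace) : Prop :=
  IsProbabilityMeasure W ∧
  (∀ s t : ℝ, 0 ≤ s → s ≤ t →
    Measure.map (fun ω => eval t ω - eval s ω) W = gaussianReal 0 ((t - s).toNNReal)) ∧
  (∀ (n : ℕ) (ts : ℕ → ℝ), (∀ i, 0 ≤ ts i) → Monotone ts →
    iIndepFun
      (fun i : Fin n => fun ω => eval (ts (i.1 + 1)) ω - eval (ts i.1) ω) W)

/-- A simple trading strategy on the (infinite horizon) path space: a sequence of
strictly increasing stopping times `τ 0 = 0 < τ 1 < ⋯ → ∞` of the natural filtration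
together with bounded position functions `F n` which depend on the path stopped at `τ n`. -/
structure SimpleStrategy where
  τ : ℕ → PathSpace → ℝ
  F : ℕ → PathSpace → ℝ
  tau_zero : ∀ ω, τ 0 ω = 0
  tau_lt : ∀ n ω, τ n ω < τ (n + 1) ω
  tau_tendsto : ∀ ω, Tendsto (fun n => τ n ω) atTop atTop
  tau_stopping : ∀ n t, MeasurableSet[natFilt t] {ω | τ n ω ≤ t}
  F_meas : ∀ n, @Measurable _ _
    (MeasurableSpace.comap (fun ω => stoppedPath ω (τ n ω)) inferInstance) _ (F n)
  F_bdd : ∀ n, ∃ C, ∀ ω, |F n ω| ≤ C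

/-- The capital process `(H ⬝ B)_t` of a simple strategy. -/
def capital (H : SimpleStrategy) (t : ℝ) (ω : PathSpace) : ℝ :=
  ∑' n, H.F n ω * (ω.1 (min (H.τ (n + 1) ω) t) - ω.1 (min (H.τ n ω) t))

/-- A simple trading strategy on the finite horizon `[0,T]`: the stopping times increase
to the terminal time `T`. -/
structure SimpleStrategyOn (T : ℝ) where
  τ : ℕ → PathSpace → ℝ
  F : ℕ → PathSpace → ℝ
  tau_zero : ∀ ω, τ 0 ω = 0
  tau_lt : ∀ n ω, τ n ω < τ (n + 1) ω
  tau_tendsto : ∀ ω, Tendsto (fun n => τ n ω) atTop (𝓝 T)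
  tau_stopping : ∀ n t, MeasurableSet[natFilt t] {ω | τ n ω ≤ t}
  F_meas : ∀ n, @Measurable _ _
    (MeasurableSpace.comap (fun ω => stoppedPath ω (τ n ω)) inferInstance) _ (F n)
  F_bdd : ∀ n, ∃ C, ∀ ω, |F n ω| ≤ C

/-- The capital process of a finite-horizon simple strategy. -/
def capitalOn {T : ℝ} (H : SimpleStrategyOn T) (t : ℝ) (ω : PathSpace) : ℝ :=
  ∑' n, H.F n ω * (ω.1 (min (H.τ (n + 1) ω) t) - ω.1 (min (H.τ n ω) t))

/-- `x` lies on the dyadic grid `2^{-n} ℤ`. -/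
def inDyadic (n : ℕ) (x : ℝ) : Prop := ∃ z : ℤ, x = (z : ℝ) * (2 : ℝ) ^ (-(n : ℤ))

/-- The stopping times `σ^n_k` of successive moves of `ω` across the dyadic grid `2^{-n}ℤ`
(with values in `[0,∞]`). -/
def sigmaTimes (ω : ℝ → ℝ) (n : ℕ) : ℕ → ℝ≥0∞
  | 0 => 0
  | k + 1 =>
    sInf (ENNReal.ofReal '' {u : ℝ | 0 ≤ u ∧ sigmaTimes ω n k ≤ ENNReal.ofReal u ∧
      inDyadic n (ω u) ∧ ω u ≠ ω (sigmaTimes ω n k).toReal})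

/-- The discrete quadratic variation `V^n_t(ω)` along the dyadic stopping times. -/
def discreteQV (ω : ℝ → ℝ) (n : ℕ) (t : ℝ) : ℝ :=
  ∑' k : ℕ, (ω (min (sigmaTimes ω n (k + 1)) (ENNReal.ofReal t)).toReal
      - ω (min (sigmaTimes ω n k) (ENNReal.ofReal t)).toReal) ^ 2

/-- `f` and `g` have the same intervals of constancy (on `[0,∞)`). -/
def SameConstancy (f g : ℝ → ℝ) : Prop :=
  ∀ u v : ℝ, 0 ≤ u → u ≤ v →
    ((∀ x ∈ Icc u v, f x = f u) ↔ ∀ x ∈ Icc u v, g x = g u)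

/-- `A` is the quadratic variation of `ω`: the discrete quadratic variations converge
locally uniformly to the continuous function `A`, which has the same intervals of
constancy as `ω`; moreover either `ω` converges at `∞` or `A` is unbounded. -/
def IsQVLimit (ω : ℝ → ℝ) (A : ℝ → ℝ) : Prop :=
  Continuous A ∧ TendstoLocallyUniformly (fun n => discreteQV ω n) A atTop ∧
  SameConstancy A ω ∧
  ((∃ L, Tendsto ω atTop (𝓝 L)) ∨ ¬ BddAbove (A '' Ici 0))

/-- `ω` admits a quadratic variation in the sense of Vovk. -/
def IsQVPath (ω : PathSpace) : Prop := ∃ A, IsQVLimit ω.1 A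

/-- `Ω^qv`, the set of paths admitting a quadratic variation. -/
def OmegaQV : Set PathSpace := {ω | IsQVPath ω}

/-- The quadratic variation `⟨ω⟩` of a path (junk value `0` off `Ω^qv`). -/
def qvOf (ω : PathSpace) : ℝ → ℝ :=
  if h : IsQVPath ω then h.choose else fun _ => 0

/-- `⟨ω⟩` as a Stieltjes function (junk value off the set where `⟨ω⟩` is monotone
and continuous). -/
def qvStieltjes (ω : PathSpace) : StieltjesFunction ℝ :=
  if h : Monotone (qvOf ω) ∧ Continuous (qvOf ω) then
    { toFun := qvOf ω
      mono' := h.1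
      right_continuous' := fun _ => h.2.continuousAt.continuousWithinAt }
  else
    { toFun := fun _ => 0
      mono' := monotone_const
      right_continuous' := fun _ => continuousWithinAt_const }

/-- `ζ^f_t(ω) = (1/2) ∫_0^t f''(ω_s) d⟨ω⟩_s`, the compensator of `f(ω)` in terms of the
pathwise quadratic variation. -/
def zetaQV (f : ℝ → ℝ) (ω : PathSpace) (t : ℝ) : ℝ :=
  (1 / 2) * ∫ s in Ioc (0 : ℝ) t, deriv (deriv f) (ω.1 s) ∂(qvStieltjes ω).measure

/-- `ζ^f_t(ω) = (1/2) ∫_0^t f''(ω_s) ds` (compensator under Wiener measure). -/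
def zetaLeb (f : ℝ → ℝ) (ω : PathSpace) (t : ℝ) : ℝ :=
  (1 / 2) * ∫ s in (0 : ℝ)..t, deriv (deriv f) (ω.1 s)

/-- `τ_t(ω) = inf{s ≥ 0 : ⟨ω⟩_s > t}` as a set. -/
def nttSet (ω : PathSpace) (t : ℝ) : Set ℝ := {s : ℝ | 0 ≤ s ∧ t < qvOf ω s}

/-- The normalizing time transformation `ntt(ω)_t = ω(τ_t(ω))`, with
`ω(∞) := lim_{s→∞} ω(s)` when `⟨ω⟩` is bounded. -/
def ntt (ω : PathSpace) (t : ℝ) : ℝ :=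
  if (nttSet ω t).Nonempty then ω.1 (sInf (nttSet ω t)) else limUnder atTop ω.1

/-- The normalizing time transformation as a map of the path space
(junk value for paths where `ntt ω` is not a continuous path). -/
def nttPath (ω : PathSpace) : PathSpace :=
  if h : Continuous (ntt ω) ∧ ∀ t ≤ 0, ntt ω t = 0 then ⟨ntt ω, h⟩
  else ⟨fun _ => 0, continuous_const, fun _ _ => rfl⟩

/-- `⟨ω⟩_∞ = ∞`, i.e. the quadratic variation is unbounded. -/
def QVUnbounded (ω : PathSpace) : Prop := ¬ BddAbove (qvOf ω '' Ici 0)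

/-- Vovk-type super-hedging outer expectation (with the modification of
Perkowski–Prömel): the minimal initial capital `λ > 0` such that some sequence of
`λ`-admissible simple strategies super-hedges `X` on `Ω^qv` in the sense of iterated
inferior limits. -/
def Ebar (X : PathSpace → EReal) : ℝ≥0∞ :=
  sInf {l : ℝ≥0∞ | ∃ lam : ℝ, 0 < lam ∧ l = ENNReal.ofReal lam ∧
    ∃ H : ℕ → SimpleStrategy,
      (∀ n (ω : PathSpace) (t : ℝ), ω ∈ OmegaQV → 0 ≤ t → -lam ≤ capital (H n) t ω) ∧
      ∀ ω ∈ OmegaQV, X ω ≤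
        liminf (fun t : ℝ =>
          liminf (fun n : ℕ => ((lam + capital (H n) t ω : ℝ) : EReal)) atTop) atTop}

/-- The outer measure `P̄`. -/
def Pbar (A : Set PathSpace) : ℝ≥0∞ := Ebar (A.indicator fun _ => (1 : EReal))

/-- Vovk's outer measure `Q̄`, defined through countable convex combinations of
admissible simple strategies. -/
def Qbar (A : Set PathSpace) : ℝ≥0∞ :=
  sInf {l : ℝ≥0∞ | ∃ lam : ℝ, 0 < lam ∧ l = ENNReal.ofReal lam ∧
    ∃ (lams : ℕ → ℝ) (H : ℕ → SimpleStrategy),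
      (∀ k, 0 < lams k) ∧ HasSum lams lam ∧
      (∀ k (ω : PathSpace) (t : ℝ), ω ∈ OmegaQV → 0 ≤ t → -(lams k) ≤ capital (H k) t ω) ∧
      ∀ ω ∈ OmegaQV,
        (A.indicator (fun _ => (1 : ℝ≥0∞)) ω) ≤
          liminf (fun t : ℝ => ∑' k, ENNReal.ofReal (lams k + capital (H k) t ω)) atTop}

/-- `C_qv[0,T]`: quadratic-variation paths on `[0,T]` (modeled as paths in `Ω^qv`
which are constant after time `T`). -/
def CQV (T : ℝ) : Set PathSpace := {ω | IsQVPath ω ∧ ∀ t, T ≤ t → ω.1 t = ω.1 T}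

/-- A martingale measure on `C_qv[0,T]`: a probability measure concentrated on
`C_qv[0,T]` under which the coordinate process is a martingale on `[0,T]` for the
natural filtration. -/
def IsMartingaleMeasureOn (T : ℝ) (P : Measure PathSpace) : Prop :=
  IsProbabilityMeasure P ∧ P (CQV T) = 1 ∧
  (∀ t, 0 ≤ t → t ≤ T → Integrable (eval t) P) ∧
  ∀ s t, 0 ≤ s → s ≤ t → t ≤ T → P[eval t | natFilt s] =ᵐ[P] eval s

/-- The (possibly infinite) expectation `E_P[f] ∈ [-∞,∞]` of a real functional. -/
def expE {Ω : Type*} [MeasurableSpace Ω] (P : Measure Ω) (f : Ω → ℝ) : EReal :=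
  ((∫⁻ ω, ENNReal.ofReal (f ω) ∂P : ℝ≥0∞) : EReal)
    - ((∫⁻ ω, ENNReal.ofReal (-(f ω)) ∂P : ℝ≥0∞) : EReal)

/-- The space `Υ` of stopped paths `(f,s)`, realized as pairs with `f` continuous,
constant on `(-∞,0]` and constant on `[s,∞)`. -/
def Upsilon : Set ((ℝ → ℝ) × ℝ) :=
  {p | Continuous p.1 ∧ 0 ≤ p.2 ∧ (∀ t ≤ 0, p.1 t = p.1 0) ∧
    ∀ t, p.2 ≤ t → p.1 t = p.1 p.2}

/-- The distance on stopped paths, assuming `s ≤ t`. -/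
def dUpAux (f : ℝ → ℝ) (s : ℝ) (g : ℝ → ℝ) (t : ℝ) : ℝ :=
  max (t - s) (max (⨆ u : Icc (0 : ℝ) s, |f u - g u|) (⨆ u : Icc s t, |g u - f s|))

/-- The metric `d_Υ` on the space of stopped paths. -/
def dUp (p q : (ℝ → ℝ) × ℝ) : ℝ :=
  if p.2 ≤ q.2 then dUpAux p.1 p.2 q.1 q.2 else dUpAux q.1 q.2 p.1 p.2

/-- The stopped path `(f(· ∧ s), s) ∈ Υ` (with clamping making it canonical). -/
def stoppedAtFun (f : ℝ → ℝ) (s : ℝ) : (ℝ → ℝ) × ℝ :=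
  (fun u => f (min (max u 0) (max s 0)), max s 0)

/-- `γ` is upper semicontinuous on `Υ` with respect to `d_Υ`. -/
def USCUpsilon (γ : (ℝ → ℝ) × ℝ → ℝ) : Prop :=
  ∀ p ∈ Upsilon, ∀ ε : ℝ, 0 < ε → ∃ δ : ℝ, 0 < δ ∧
    ∀ q ∈ Upsilon, dUp p q < δ → γ q < γ p + ε

/-- `τ` is a stopping time of the natural filtration. -/
def IsStoppingTimeN (τ : PathSpace → ℝ) : Prop :=
  ∀ t, MeasurableSet[natFilt t] {ω | τ ω ≤ t}

end RF
namespace RF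

/-! ### Infrastructure: topology and measurability of the path space -/

/-- The embedding of `PathSpace` into `C(ℝ, ℝ)`. -/
def toCM (ω : PathSpace) : C(ℝ, ℝ) := ⟨ω.1, ω.2.1⟩

lemma inducing_toCM : Topology.IsInducing toCM := ⟨rfl⟩

instance : SecondCountableTopology PathSpace :=
  inducing_toCM.secondCountableTopology

lemma continuous_eval (s : ℝ) : Continuous (eval s) := by
  have : eval s = (fun f : C(ℝ, ℝ) => f s) ∘ toCM := rfl
  rw [this]
  exact (continuous_eval_const s).comp inducing_toCM.continuous

lemma natFilt_le_borel (t : ℝ) : natFilt t ≤ (inferInstance : MeasurableSpace PathSpace) := by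
  refine iSup_le fun s => iSup_le fun _ => ?_
  exact MeasurableSpace.comap_le_iff_le_map.2 (fun u hu => (continuous_eval s).measurable hu)

lemma natFilt_mono {s t : ℝ} (h : s ≤ t) : natFilt s ≤ natFilt t := by
  refine iSup_le fun u => iSup_le fun hu => ?_
  exact le_iSup_of_le u (le_iSup_of_le (hu.trans h) le_rfl)

/-- A stopping time of the natural filtration is Borel measurable. -/
lemma IsStoppingTimeN.measurable {τ : PathSpace → ℝ} (h : IsStoppingTimeN τ) :
    Measurable τ := by
  refine measurable_of_Iic fun t => ?_
  exact natFilt_le_borel t _ (h t)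

/-- `min` as a curried continuous-map family. -/
def minCM : C(ℝ, C(ℝ, ℝ)) :=
  ContinuousMap.curry ⟨fun p : ℝ × ℝ => min p.2 p.1, by fun_prop⟩

lemma continuous_stoppedPath :
    Continuous (fun p : PathSpace × ℝ => stoppedPath p.1 p.2) := by
  rw [inducing_toCM.continuous_iff]
  have : (toCM ∘ fun p : PathSpace × ℝ => stoppedPath p.1 p.2)
      = fun p : PathSpace × ℝ => (toCM p.1).comp (minCM p.2) := by
    funext p; ext s; rfl
  rw [this]
  exact ContinuousMap.continuous_comp'.comp
    ((minCM.continuous.comp continuous_snd).prodMk (inducing_toCM.continuous.comp continuous_fst))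

lemma measurable_stoppedPath_comp {τ : PathSpace → ℝ} (hτ : Measurable τ) :
    Measurable (fun ω => stoppedPath ω (τ ω)) :=
  continuous_stoppedPath.measurable.comp (measurable_id.prodMk hτ)

/-! ### Invariance of the natural filtration and Galmarino-type lemmas -/

/-- Two paths agreeing up to time `t`. -/
def AgreeUpTo (ω ω' : PathSpace) (t : ℝ) : Prop := ∀ s ≤ t, ω.1 s = ω'.1 s

lemma AgreeUpTo.symm {ω ω' : PathSpace} {t : ℝ} (h : AgreeUpTo ω ω' t) : AgreeUpTo ω' ω t :=
  fun s hs => (h s hs).symm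

lemma AgreeUpTo.mono {ω ω' : PathSpace} {s t : ℝ} (h : AgreeUpTo ω ω' t) (hst : s ≤ t) :
    AgreeUpTo ω ω' s := fun u hu => h u (hu.trans hst)

/-- Sets of the natural filtration at time `t` only depend on the path up to time `t`. -/
lemma natFilt_invariant {t : ℝ} {A : Set PathSpace} (hA : MeasurableSet[natFilt t] A)
    {ω ω' : PathSpace} (hagree : AgreeUpTo ω ω' t) : ω ∈ A ↔ ω' ∈ A := by
  let I : MeasurableSpace PathSpace :=
    { MeasurableSet' := fun B => ∀ ω₁ ω₂ : PathSpace, AgreeUpTo ω₁ ω₂ t → (ω₁ ∈ B ↔ ω₂ ∈ B)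
      measurableSet_empty := fun _ _ _ => Iff.rfl
      measurableSet_compl := fun B hB ω₁ ω₂ h => not_congr (hB ω₁ ω₂ h)
      measurableSet_iUnion := fun f hf ω₁ ω₂ h => by
        simp only [Set.mem_iUnion]
        exact exists_congr fun i => hf i ω₁ ω₂ h }
  have hle : natFilt t ≤ I := by
    refine iSup_le fun s => iSup_le fun hs => ?_
    rintro B ⟨S, -, rfl⟩ ω₁ ω₂ h
    simp only [Set.mem_preimage]
    rw [show eval s ω₁ = eval s ω₂ from h s hs]
  exact hle A hA ω ω' hagree

lemma agree_stoppedPath (ω : PathSpace) (u : ℝ) : AgreeUpTo ω (stoppedPath ω u) u := by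
  intro s hs
  simp only [stoppedPath, min_eq_left hs]

lemma stoppedPath_stoppedPath (ω : PathSpace) {u v : ℝ} (h : v ≤ u) :
    stoppedPath (stoppedPath ω u) v = stoppedPath ω v := by
  apply Subtype.ext
  funext s
  show ω.1 (min (min s v) u) = ω.1 (min s v)
  rw [min_eq_left ((min_le_right s v).trans h)]

/-- Galmarino: a stopping time only depends on the path up to the stopping time. -/
lemma IsStoppingTimeN.eq_of_agree {τ : PathSpace → ℝ} (hτ : IsStoppingTimeN τ)
    {ω ω' : PathSpace} {s : ℝ} (hagree : AgreeUpTo ω ω' s) (h : τ ω ≤ s) : τ ω' = τ ω := by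
  have h1 : τ ω' ≤ τ ω :=
    (natFilt_invariant (hτ (τ ω)) (hagree.mono h)).1 (show τ ω ≤ τ ω from le_rfl)
  have h2 : τ ω ≤ τ ω' :=
    (natFilt_invariant (hτ (τ ω')) ((hagree.mono (h1.trans h)).symm)).1 (show τ ω' ≤ τ ω' from le_rfl)
  exact le_antisymm h1 h2

lemma IsStoppingTimeN.lt_of_agree {τ : PathSpace → ℝ} (hτ : IsStoppingTimeN τ)
    {ω ω' : PathSpace} {s : ℝ} (hagree : AgreeUpTo ω ω' s) (h : s < τ ω) : s < τ ω' := by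
  by_contra hc
  push_neg at hc
  have := hτ.eq_of_agree hagree.symm hc
  linarith

lemma IsStoppingTimeN.stopped_eq {τ : PathSpace → ℝ} (hτ : IsStoppingTimeN τ)
    {ω : PathSpace} {s : ℝ} (h : τ ω ≤ s) : τ (stoppedPath ω s) = τ ω :=
  hτ.eq_of_agree (agree_stoppedPath ω s) h

/-- Factorization: a function measurable w.r.t. the σ-algebra generated by the stopped path
is invariant under stopping. -/
lemma factor_stopped {τ : PathSpace → ℝ} (hτ : IsStoppingTimeN τ) {F : PathSpace → ℝ}
    (hF : @Measurable _ _
      (MeasurableSpace.comap (fun ω => stoppedPath ω (τ ω)) inferInstance) _ F)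
    (ω : PathSpace) : F (stoppedPath ω (τ ω)) = F ω := by
  obtain ⟨B, -, hB⟩ := hF (measurableSet_singleton (F ω))
  have hω : ω ∈ (fun ω => stoppedPath ω (τ ω)) ⁻¹' B := by rw [hB]; rfl
  have hidem : stoppedPath (stoppedPath ω (τ ω)) (τ (stoppedPath ω (τ ω)))
      = stoppedPath ω (τ ω) := by
    rw [hτ.stopped_eq le_rfl, stoppedPath_stoppedPath ω le_rfl]
  have : stoppedPath ω (τ ω) ∈ (fun ω => stoppedPath ω (τ ω)) ⁻¹' B := by
    simpa only [Set.mem_preimage, hidem] using hω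
  rw [hB] at this
  exact this

/-! ### Basic properties of simple strategies -/

lemma tau_strictMono (K : SimpleStrategy) (ω : PathSpace) : StrictMono (fun n => K.τ n ω) :=
  strictMono_nat_of_lt_succ fun n => K.tau_lt n ω

lemma tau_nonneg (K : SimpleStrategy) (n : ℕ) (ω : PathSpace) : 0 ≤ K.τ n ω := by
  have h := (tau_strictMono K ω).monotone (Nat.zero_le n)
  simpa [K.tau_zero ω] using h

lemma exists_tau_gt (K : SimpleStrategy) (ω : PathSpace) (s : ℝ) : ∃ m, s < K.τ m ω :=
  ((K.tau_tendsto ω).eventually_gt_atTop s).exists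

/-- The first time of `K.τ` strictly after `s`. -/
def nxt (K : SimpleStrategy) (s : ℝ) (ω : PathSpace) : ℝ :=
  K.τ (Nat.find (exists_tau_gt K ω s)) ω

lemma lt_nxt (K : SimpleStrategy) (s : ℝ) (ω : PathSpace) : s < nxt K s ω :=
  Nat.find_spec (exists_tau_gt K ω s)

lemma nxt_min (K : SimpleStrategy) {s : ℝ} {ω : PathSpace} {m : ℕ} (h : s < K.τ m ω) :
    nxt K s ω ≤ K.τ m ω :=
  (tau_strictMono K ω).monotone (Nat.find_min' _ h)

lemma nxt_eq_tau (K : SimpleStrategy) (s : ℝ) (ω : PathSpace) : ∃ m, nxt K s ω = K.τ m ω :=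
  ⟨_, rfl⟩

/-! ### The merged sequence of stopping times -/

variable (H : ℕ → SimpleStrategy) (N : ℕ)

/-- Merged stopping times of the strategies `H 0, …, H N`. -/
def mtau : ℕ → PathSpace → ℝ
  | 0 => fun _ => 0
  | j + 1 => fun ω =>
      (Finset.range (N + 1)).inf' ⟨0, by simp⟩ (fun k => nxt (H k) (mtau j ω) ω)

lemma mtau_zero (ω : PathSpace) : mtau H N 0 ω = 0 := rfl

lemma mtau_lt_succ (j : ℕ) (ω : PathSpace) : mtau H N j ω < mtau H N (j + 1) ω := by
  have heq : mtau H N (j + 1) ω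
      = (Finset.range (N + 1)).inf' ⟨0, by simp⟩ (fun k => nxt (H k) (mtau H N j ω) ω) := rfl
  rw [heq]
  obtain ⟨k, _, hk⟩ := Finset.exists_mem_eq_inf' (⟨0, by simp⟩ : (Finset.range (N+1)).Nonempty)
    (fun k => nxt (H k) (mtau H N j ω) ω)
  rw [hk]; exact lt_nxt (H k) (mtau H N j ω) ω

lemma mtau_strictMono (ω : PathSpace) : StrictMono (fun j => mtau H N j ω) :=
  strictMono_nat_of_lt_succ fun j => mtau_lt_succ H N j ω

lemma mtau_nonneg (j : ℕ) (ω : PathSpace) : 0 ≤ mtau H N j ω := by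
  have h := (mtau_strictMono H N ω).monotone (Nat.zero_le j)
  simpa [mtau_zero] using h

lemma mtau_succ_le {k : ℕ} (hk : k ≤ N) (j : ℕ) (ω : PathSpace) :
    mtau H N (j + 1) ω ≤ nxt (H k) (mtau H N j ω) ω :=
  Finset.inf'_le _ (by simp [Nat.lt_succ_iff, hk])

lemma mtau_succ_le_tau {k : ℕ} (hk : k ≤ N) {j m : ℕ} {ω : PathSpace}
    (h : mtau H N j ω < (H k).τ m ω) : mtau H N (j + 1) ω ≤ (H k).τ m ω :=
  (mtau_succ_le H N hk j ω).trans (nxt_min (H k) h)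

lemma mtau_grid (j : ℕ) (ω : PathSpace) :
    ∃ k ≤ N, ∃ m, mtau H N (j + 1) ω = (H k).τ m ω ∧ mtau H N j ω < (H k).τ m ω := by
  obtain ⟨k, hk, hval⟩ := Finset.exists_mem_eq_inf' (⟨0, by simp⟩ : (Finset.range (N+1)).Nonempty)
    (fun k => nxt (H k) (mtau H N j ω) ω)
  refine ⟨k, by simpa [Nat.lt_succ_iff] using hk, Nat.find (exists_tau_gt (H k) ω (mtau H N j ω)),
    hval, Nat.find_spec (exists_tau_gt (H k) ω (mtau H N j ω))⟩

lemma mtau_dichotomy {k : ℕ} (hk : k ≤ N) (j m : ℕ) (ω : PathSpace) :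
    (H k).τ m ω ≤ mtau H N j ω ∨ mtau H N (j + 1) ω ≤ (H k).τ m ω := by
  by_cases h : mtau H N j ω < (H k).τ m ω
  · exact Or.inr (mtau_succ_le_tau H N hk h)
  · exact Or.inl (le_of_not_gt h)

lemma mtau_tendsto (ω : PathSpace) : Tendsto (fun j => mtau H N j ω) atTop atTop := by
  refine tendsto_atTop_atTop_of_monotone (mtau_strictMono H N ω).monotone ?_
  intro M
  by_contra hc
  push_neg at hc
  have hbd : ∀ j, mtau H N j ω ≤ M := fun j => (hc j).le
  have hmk : ∀ k : ℕ, ∃ mk : ℕ, ∀ m : ℕ, (H k).τ m ω ≤ M → m < mk := by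
    intro k
    obtain ⟨mk, hmk⟩ := (((H k).tau_tendsto ω).eventually_gt_atTop M).exists_forall_of_atTop
    exact ⟨mk, fun m hm => by
      by_contra hge
      exact absurd hm (not_le.2 (hmk m (le_of_not_gt hge)))⟩
  choose mk hmk using hmk
  set B : ℕ := (Finset.range (N + 1)).sup mk with hB
  set T : Finset ℝ := ((Finset.range (N + 1)) ×ˢ (Finset.range (B + 1))).image
    (fun p => (H p.1).τ p.2 ω) with hT
  have hmem : ∀ j : ℕ, mtau H N (j + 1) ω ∈ (T : Set ℝ) := by
    intro j
    obtain ⟨k, hk, m, heq, hlt⟩ := mtau_grid H N j ω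
    have hτM : (H k).τ m ω ≤ M := heq ▸ hbd (j + 1)
    have hmlt : m < mk k := hmk k m hτM
    have hmB : m ≤ B := (Nat.lt_of_lt_of_le hmlt
      (Finset.le_sup (by simp [Nat.lt_succ_iff, hk]))).le
    simp only [hT, Finset.coe_image, Set.mem_image, Finset.mem_coe, Finset.mem_product,
      Finset.mem_range]
    exact ⟨(k, m), ⟨by omega, by omega⟩, heq.symm⟩
  have hinj : Function.Injective (fun j : ℕ => mtau H N (j + 1) ω) := by
    intro a b hab
    have := (mtau_strictMono H N ω).injective (a₁ := a + 1) (a₂ := b + 1) hab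
    omega
  have hinf : (Set.range fun j : ℕ => mtau H N (j + 1) ω).Infinite :=
    Set.infinite_range_of_injective hinj
  have hsub : (Set.range fun j : ℕ => mtau H N (j + 1) ω) ⊆ (T : Set ℝ) := by
    rintro x ⟨j, rfl⟩; exact hmem j
  exact hinf (T.finite_toSet.subset hsub)

/-! ### The position index of each strategy at a merged time -/

lemma exists_mtau_lt_tau (k j : ℕ) (ω : PathSpace) : ∃ m, mtau H N j ω < (H k).τ m ω :=
  exists_tau_gt (H k) ω (mtau H N j ω)

/-- The index of the active position of strategy `H k` during `(mtau j, mtau (j+1)]`. -/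
def pidx (k j : ℕ) (ω : PathSpace) : ℕ :=
  Nat.find (exists_mtau_lt_tau H N k j ω) - 1

lemma pfind_pos (k j : ℕ) (ω : PathSpace) : 0 < Nat.find (exists_mtau_lt_tau H N k j ω) := by
  rcases Nat.eq_zero_or_pos (Nat.find (exists_mtau_lt_tau H N k j ω)) with h | h
  swap
  · exact h
  · exfalso
    have := Nat.find_spec (exists_mtau_lt_tau H N k j ω)
    rw [h] at this
    rw [(H k).tau_zero ω] at this
    exact absurd this (not_lt.2 (mtau_nonneg H N j ω))

lemma pidx_succ (k j : ℕ) (ω : PathSpace) :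
    pidx H N k j ω + 1 = Nat.find (exists_mtau_lt_tau H N k j ω) :=
  Nat.succ_pred_eq_of_pos (pfind_pos H N k j ω)

lemma pidx_spec2 (k j : ℕ) (ω : PathSpace) :
    mtau H N j ω < (H k).τ (pidx H N k j ω + 1) ω := by
  rw [pidx_succ]
  exact Nat.find_spec (exists_mtau_lt_tau H N k j ω)

lemma pidx_spec1 (k j : ℕ) (ω : PathSpace) :
    (H k).τ (pidx H N k j ω) ω ≤ mtau H N j ω := by
  have h := Nat.find_min (exists_mtau_lt_tau H N k j ω)
    (m := pidx H N k j ω) (by rw [← pidx_succ H N k j ω]; omega)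
  exact le_of_not_gt h

lemma pidx_unique {k j m : ℕ} {ω : PathSpace}
    (h1 : (H k).τ m ω ≤ mtau H N j ω) (h2 : mtau H N j ω < (H k).τ (m + 1) ω) :
    m = pidx H N k j ω := by
  have hle : Nat.find (exists_mtau_lt_tau H N k j ω) ≤ m + 1 := Nat.find_min' _ h2
  have hgt : m < Nat.find (exists_mtau_lt_tau H N k j ω) := by
    by_contra hc
    push_neg at hc
    have := (tau_strictMono (H k) ω).monotone hc
    have hspec := Nat.find_spec (exists_mtau_lt_tau H N k j ω)
    have : (H k).τ (Nat.find (exists_mtau_lt_tau H N k j ω)) ω ≤ mtau H N j ω :=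
      le_trans this h1
    linarith
  have := pidx_succ H N k j ω
  omega

lemma pidx_le {k : ℕ} (hk : k ≤ N) (j : ℕ) (ω : PathSpace) : pidx H N k j ω ≤ j := by
  induction j with
  | zero =>
    by_contra hc
    have h1 : 1 ≤ pidx H N k 0 ω := by omega
    have := (tau_strictMono (H k) ω).monotone h1
    have h0 : (H k).τ 0 ω < (H k).τ 1 ω := (H k).tau_lt 0 ω
    have := pidx_spec1 H N k 0 ω
    rw [mtau_zero] at this
    have := tau_nonneg (H k) 1 ω
    have h00 : (H k).τ 0 ω = 0 := (H k).tau_zero ω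
    have h1pos : (0:ℝ) < (H k).τ 1 ω := by rw [← h00]; exact h0
    have hle : (H k).τ 1 ω ≤ (H k).τ (pidx H N k 0 ω) ω := (tau_strictMono (H k) ω).monotone h1
    linarith
  | succ j ih =>
    have h2 : mtau H N j ω < (H k).τ (pidx H N k j ω + 1) ω := pidx_spec2 H N k j ω
    have hsucc : mtau H N (j + 1) ω ≤ (H k).τ (pidx H N k j ω + 1) ω :=
      mtau_succ_le_tau H N hk h2
    have hlt : (H k).τ (pidx H N k (j+1) ω) ω ≤ mtau H N (j + 1) ω := pidx_spec1 H N k (j+1) ω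
    have : (H k).τ (pidx H N k (j+1) ω) ω < (H k).τ (pidx H N k j ω + 2) ω := by
      have : (H k).τ (pidx H N k j ω + 1) ω < (H k).τ (pidx H N k j ω + 2) ω :=
        (H k).tau_lt _ ω
      linarith
    have hidx : pidx H N k (j+1) ω < pidx H N k j ω + 2 := by
      by_contra hc
      push_neg at hc
      exact absurd ((tau_strictMono (H k) ω).monotone hc) (not_le.2 this)
    omega

/-- The merged position function. -/
def mF (j : ℕ) (ω : PathSpace) : ℝ :=
  ∑ k ∈ Finset.range (N + 1), (H k).F (pidx H N k j ω) ω

/-! ### Measurability of the merged strategy -/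

lemma tau_isStopping (K : SimpleStrategy) (m : ℕ) : IsStoppingTimeN (K.τ m) :=
  fun t => K.tau_stopping m t

lemma mtau_isStopping (j : ℕ) : IsStoppingTimeN (mtau H N j) := by
  induction j with
  | zero =>
    intro t
    have : {ω : PathSpace | mtau H N 0 ω ≤ t} = {_ω : PathSpace | (0:ℝ) ≤ t} := rfl
    rw [this]
    exact @MeasurableSet.const PathSpace (natFilt t) ((0:ℝ) ≤ t)
  | succ j ih =>
    intro t
    have hset : {ω : PathSpace | mtau H N (j+1) ω ≤ t} =
        ⋃ (k : Fin (N+1)) (m : ℕ) (q : ℚ),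
          ({ω | mtau H N j ω ≤ (q:ℝ)} ∩ {ω | (H k.1).τ m ω ≤ (q:ℝ)}ᶜ
            ∩ {ω | (H k.1).τ m ω ≤ t}) := by
      ext ω
      simp only [Set.mem_setOf_eq, Set.mem_iUnion, Set.mem_inter_iff, Set.mem_compl_iff]
      constructor
      · intro hle
        obtain ⟨k, hk, m, heq, hlt⟩ := mtau_grid H N j ω
        obtain ⟨q, hq1, hq2⟩ := exists_rat_btwn hlt
        exact ⟨⟨k, by omega⟩, m, q, ⟨⟨hq1.le, not_le.2 hq2⟩, heq ▸ hle⟩⟩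
      · rintro ⟨k, m, q, ⟨⟨hq1, hq2⟩, hle⟩⟩
        push_neg at hq2
        have hlt : mtau H N j ω < (H k.1).τ m ω := lt_of_le_of_lt hq1 hq2
        exact (mtau_succ_le_tau H N (by omega : k.1 ≤ N) hlt).trans hle
    rw [hset]
    refine MeasurableSet.iUnion fun k => MeasurableSet.iUnion fun m =>
      MeasurableSet.iUnion fun q => ?_
    by_cases hq : (q : ℝ) ≤ t
    · refine MeasurableSet.inter (MeasurableSet.inter ?_ ?_) ?_
      · exact natFilt_mono hq _ (ih (q:ℝ))
      · exact MeasurableSet.compl (natFilt_mono hq _ ((H k.1).tau_stopping m (q:ℝ)))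
      · exact (H k.1).tau_stopping m t
    · have : ({ω : PathSpace | mtau H N j ω ≤ (q:ℝ)} ∩ {ω | (H k.1).τ m ω ≤ (q:ℝ)}ᶜ
          ∩ {ω | (H k.1).τ m ω ≤ t}) = ∅ := by
        ext ω
        simp only [Set.mem_inter_iff, Set.mem_compl_iff, Set.mem_setOf_eq, Set.mem_empty_iff_false,
          iff_false]
        rintro ⟨⟨-, h2⟩, h3⟩
        push_neg at h2
        push_neg at hq
        linarith
      rw [this]
      exact @MeasurableSet.empty _ (natFilt t)
    
lemma mtau_measurable (j : ℕ) : Measurable (mtau H N j) :=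
  (mtau_isStopping H N j).measurable

lemma F_borel (K : SimpleStrategy) (m : ℕ) : Measurable (K.F m) := by
  refine (K.F_meas m).mono ?_ le_rfl
  exact Measurable.comap_le
    (measurable_stoppedPath_comp (tau_isStopping K m).measurable)

lemma pidx_eq_iff {k j m : ℕ} {ω : PathSpace} :
    pidx H N k j ω = m ↔
      (H k).τ m ω ≤ mtau H N j ω ∧ mtau H N j ω < (H k).τ (m + 1) ω := by
  constructor
  · rintro rfl
    exact ⟨pidx_spec1 H N k j ω, pidx_spec2 H N k j ω⟩
  · rintro ⟨h1, h2⟩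
    exact (pidx_unique H N h1 h2).symm

lemma pidx_measurable (k j : ℕ) : Measurable (pidx H N k j) := by
  refine measurable_to_countable' fun m => ?_
  have : pidx H N k j ⁻¹' {m} =
      {ω | (H k).τ m ω ≤ mtau H N j ω} ∩ {ω | mtau H N j ω < (H k).τ (m + 1) ω} := by
    ext ω
    simp only [Set.mem_preimage, Set.mem_singleton_iff, Set.mem_inter_iff, Set.mem_setOf_eq]
    exact pidx_eq_iff H N
  rw [this]
  exact ((measurableSet_le ((tau_isStopping (H k) m).measurable) (mtau_measurable H N j))).inter
    (measurableSet_lt (mtau_measurable H N j) ((tau_isStopping (H k) (m+1)).measurable))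

lemma mF_measurable (j : ℕ) : Measurable (mF H N j) := by
  refine Finset.measurable_sum _ fun k hk => ?_
  rw [Finset.mem_range] at hk
  have heq : (fun ω => (H k).F (pidx H N k j ω) ω) =
      fun ω => ∑ m ∈ Finset.range (j + 1), if pidx H N k j ω = m then (H k).F m ω else 0 := by
    funext ω
    rw [Finset.sum_ite_eq (Finset.range (j+1)) (pidx H N k j ω) (fun m => (H k).F m ω)]
    simp [Nat.lt_succ_iff, pidx_le H N (by omega : k ≤ N) j ω]
  rw [heq]
  refine Finset.measurable_sum _ fun m _ => ?_
  refine Measurable.ite ?_ (F_borel (H k) m) measurable_const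
  exact (pidx_measurable H N k j) (measurableSet_singleton m)
  

/-! ### Invariance of the merged position under stopping -/

lemma pidx_stopped {k : ℕ} (j : ℕ) (ω : PathSpace) :
    pidx H N k j (stoppedPath ω (mtau H N j ω)) = pidx H N k j ω := by
  set σ := mtau H N j ω with hσ
  set ω' := stoppedPath ω σ with hω'
  have hmt : mtau H N j ω' = σ := (mtau_isStopping H N j).stopped_eq le_rfl
  have h1 : (H k).τ (pidx H N k j ω) ω' = (H k).τ (pidx H N k j ω) ω :=
    (tau_isStopping (H k) _).eq_of_agree (agree_stoppedPath ω σ) (pidx_spec1 H N k j ω)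
  have h2 : σ < (H k).τ (pidx H N k j ω + 1) ω' :=
    (tau_isStopping (H k) _).lt_of_agree (agree_stoppedPath ω σ) (pidx_spec2 H N k j ω)
  refine ((pidx_unique H N (m := pidx H N k j ω) (ω := ω') ?_ ?_)).symm
  · rw [hmt, h1]; exact pidx_spec1 H N k j ω
  · rw [hmt]; exact h2

lemma F_stopped_of_le (K : SimpleStrategy) (m : ℕ) {ω : PathSpace} {s : ℝ}
    (h : K.τ m ω ≤ s) : K.F m (stoppedPath ω s) = K.F m ω := by
  have hτ : K.τ m (stoppedPath ω s) = K.τ m ω :=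
    (tau_isStopping K m).eq_of_agree (agree_stoppedPath ω s) h
  have h1 : K.F m (stoppedPath (stoppedPath ω s) (K.τ m (stoppedPath ω s)))
      = K.F m (stoppedPath ω s) := factor_stopped (tau_isStopping K m) (K.F_meas m) _
  have h2 : K.F m (stoppedPath ω (K.τ m ω)) = K.F m ω :=
    factor_stopped (tau_isStopping K m) (K.F_meas m) ω
  rw [hτ, stoppedPath_stoppedPath ω h] at h1
  rw [← h1, h2]

lemma mF_stopped (j : ℕ) (ω : PathSpace) :
    mF H N j (stoppedPath ω (mtau H N j ω)) = mF H N j ω := by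
  unfold mF
  refine Finset.sum_congr rfl fun k _ => ?_
  rw [pidx_stopped H N j ω]
  exact F_stopped_of_le (H k) _ (pidx_spec1 H N k j ω)

/-! ### The merged strategy -/

/-- The sum of the simple strategies `H 0, …, H N`, as a simple strategy. -/
def mergeStrategy : SimpleStrategy where
  τ := mtau H N
  F := mF H N
  tau_zero := mtau_zero H N
  tau_lt := fun j ω => mtau_lt_succ H N j ω
  tau_tendsto := mtau_tendsto H N
  tau_stopping := fun j t => mtau_isStopping H N j t
  F_meas := by
    intro j
    intro S hS
    refine ⟨mF H N j ⁻¹' S, mF_measurable H N j hS, ?_⟩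
    ext ω
    simp only [Set.mem_preimage]
    rw [mF_stopped H N j ω]
  F_bdd := by
    intro j
    have hC : ∀ k m, ∃ C, ∀ ω, |(H k).F m ω| ≤ C := fun k m => (H k).F_bdd m
    choose C hC using hC
    refine ⟨∑ k ∈ Finset.range (N + 1), ∑ m ∈ Finset.range (j + 1), |C k m|, fun ω => ?_⟩
    refine (Finset.abs_sum_le_sum_abs _ _).trans (Finset.sum_le_sum fun k hk => ?_)
    rw [Finset.mem_range] at hk
    have h1 : |(H k).F (pidx H N k j ω) ω| ≤ |C k (pidx H N k j ω)| :=
      (hC k _ ω).trans (le_abs_self _)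
    refine h1.trans (Finset.single_le_sum (f := fun m => |C k m|) (fun m _ => abs_nonneg _) ?_)
    rw [Finset.mem_range, Nat.lt_succ_iff]
    exact pidx_le H N (by omega) j ω

/-! ### The capital of the merged strategy -/

lemma capital_eq_sum_range (K : SimpleStrategy) (t : ℝ) (ω : PathSpace) {M : ℕ}
    (hM : ∀ n, M ≤ n → t ≤ K.τ n ω) :
    capital K t ω = ∑ n ∈ Finset.range M,
      K.F n ω * (ω.1 (min (K.τ (n + 1) ω) t) - ω.1 (min (K.τ n ω) t)) := by
  refine tsum_eq_sum fun n hn => ?_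
  rw [Finset.mem_range, not_lt] at hn
  have h1 : min (K.τ n ω) t = t := min_eq_right (hM n hn)
  have h2 : min (K.τ (n + 1) ω) t = t := min_eq_right (hM (n + 1) (by omega))
  rw [h1, h2, sub_self, mul_zero]

lemma capital_zero (K : SimpleStrategy) (t : ℝ) (ω : PathSpace) :
    capital K (min 0 t) ω = 0 := by
  have h : ∀ n : ℕ, K.F n ω * (ω.1 (min (K.τ (n + 1) ω) (min 0 t))
      - ω.1 (min (K.τ n ω) (min 0 t))) = 0 := by
    intro n
    have h1 : min (K.τ n ω) (min 0 t) = min 0 t :=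
      min_eq_right ((min_le_left 0 t).trans (tau_nonneg K n ω))
    have h2 : min (K.τ (n + 1) ω) (min 0 t) = min 0 t :=
      min_eq_right ((min_le_left 0 t).trans (tau_nonneg K (n + 1) ω))
    rw [h1, h2, sub_self, mul_zero]
  unfold capital
  simp only [h, tsum_zero]

lemma min_min_of_le {a b t : ℝ} (h : a ≤ b) : min a (min b t) = min a t := by
  rw [min_comm b t, ← min_assoc]
  exact min_eq_left ((min_le_left a t).trans h)

lemma min_min_of_ge {a b t : ℝ} (h : b ≤ a) : min a (min b t) = min b t :=
  min_eq_right ((min_le_left b t).trans h)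

/-- The one-step increment of the capital of strategy `H k` over a merged interval. -/
lemma capital_step {k : ℕ} (hk : k ≤ N) (j : ℕ) (t : ℝ) (ω : PathSpace) :
    capital (H k) (min (mtau H N (j + 1) ω) t) ω - capital (H k) (min (mtau H N j ω) t) ω
      = (H k).F (pidx H N k j ω) ω
        * (ω.1 (min (mtau H N (j + 1) ω) t) - ω.1 (min (mtau H N j ω) t)) := by
  have hσσ' : mtau H N j ω < mtau H N (j + 1) ω := mtau_lt_succ H N j ω
  set σ := mtau H N j ω with hσdef
  set σ' := mtau H N (j + 1) ω with hσ'def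
  set p := pidx H N k j ω with hpdef
  obtain ⟨M0, hM0⟩ := (((H k).tau_tendsto ω).eventually_ge_atTop σ').exists_forall_of_atTop
  set M := max M0 (p + 1) with hMdef
  have hM : ∀ n, M ≤ n → σ' ≤ (H k).τ n ω := fun n hn => hM0 n (le_trans (le_max_left _ _) hn)
  have hpM : p < M := lt_of_lt_of_le (Nat.lt_succ_self p) (le_max_right _ _)
  have hc1 : capital (H k) (min σ' t) ω = ∑ n ∈ Finset.range M,
      (H k).F n ω * (ω.1 (min ((H k).τ (n + 1) ω) (min σ' t))
        - ω.1 (min ((H k).τ n ω) (min σ' t))) :=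
    capital_eq_sum_range (H k) _ ω fun n hn => (min_le_left σ' t).trans (hM n hn)
  have hc2 : capital (H k) (min σ t) ω = ∑ n ∈ Finset.range M,
      (H k).F n ω * (ω.1 (min ((H k).τ (n + 1) ω) (min σ t))
        - ω.1 (min ((H k).τ n ω) (min σ t))) :=
    capital_eq_sum_range (H k) _ ω fun n hn =>
      (min_le_left σ t).trans (hσσ'.le.trans (hM n hn))
  rw [hc1, hc2, ← Finset.sum_sub_distrib]
  rw [Finset.sum_eq_single p]
  · -- the term at `p`
    have h2 : (H k).τ p ω ≤ σ := pidx_spec1 H N k j ω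
    have h3 : σ' ≤ (H k).τ (p + 1) ω := by
      rcases mtau_dichotomy H N hk j (p + 1) ω with h | h
      · exact absurd (pidx_spec2 H N k j ω) (not_lt.2 h)
      · exact h
    rw [min_min_of_ge h3, min_min_of_ge (hσσ'.le.trans h3),
      min_min_of_le (h2.trans hσσ'.le), min_min_of_le h2]
    ring
  · -- terms away from `p` vanish
    intro n _ hnp
    rcases mtau_dichotomy H N hk j (n + 1) ω with h1 | h1
    · have h0 : (H k).τ n ω ≤ σ := ((H k).tau_lt n ω).le.trans h1
      rw [min_min_of_le h1, min_min_of_le (h1.trans hσσ'.le), min_min_of_le h0,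
        min_min_of_le (h0.trans hσσ'.le)]
      ring
    · rcases mtau_dichotomy H N hk j n ω with h2 | h2
      · exact absurd (pidx_unique H N h2 (hσσ'.trans_le h1)) hnp
      · rw [min_min_of_ge h1, min_min_of_ge (hσσ'.le.trans h1),
          min_min_of_ge h2, min_min_of_ge (hσσ'.le.trans h2)]
        ring
  · intro hnot
    exact absurd (Finset.mem_range.2 hpM) hnot

lemma telescope (t : ℝ) (ω : PathSpace) (J : ℕ) :
    ∑ j ∈ Finset.range J, mF H N j ω
        * (ω.1 (min (mtau H N (j + 1) ω) t) - ω.1 (min (mtau H N j ω) t))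
      = ∑ k ∈ Finset.range (N + 1), capital (H k) (min (mtau H N J ω) t) ω := by
  induction J with
  | zero =>
    simp only [Finset.range_zero, Finset.sum_empty]
    rw [show mtau H N 0 ω = 0 from rfl]
    rw [Finset.sum_congr rfl fun k _ => capital_zero (H k) t ω]
    simp
  | succ J ih =>
    rw [Finset.sum_range_succ, ih]
    unfold mF
    rw [Finset.sum_mul]
    rw [Finset.sum_congr rfl fun k hk =>
      ((capital_step H N (by
        rw [Finset.mem_range] at hk; omega) J t ω).symm)]
    rw [← Finset.sum_add_distrib]
    refine Finset.sum_congr rfl fun k _ => ?_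
    ring

/-- The capital of the merged strategy is the sum of the individual capitals. -/
lemma capital_merge (t : ℝ) (ω : PathSpace) :
    capital (mergeStrategy H N) t ω = ∑ k ∈ Finset.range (N + 1), capital (H k) t ω := by
  obtain ⟨J, hJ⟩ := ((mtau_tendsto H N ω).eventually_ge_atTop t).exists_forall_of_atTop
  have hJt : t ≤ mtau H N J ω := hJ J le_rfl
  have h1 : capital (mergeStrategy H N) t ω = ∑ j ∈ Finset.range J,
      mF H N j ω * (ω.1 (min (mtau H N (j + 1) ω) t) - ω.1 (min (mtau H N j ω) t)) :=
    capital_eq_sum_range (mergeStrategy H N) t ω fun n hn => hJ n hn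
  rw [h1, telescope H N t ω J]
  refine Finset.sum_congr rfl fun k _ => ?_
  rw [min_eq_right hJt]

/-- **Comparison of the two outer measures**: for every `A ⊆ Ω^qv` one has `P̄(A) ≤ Q̄(A)`. -/
theorem Pbar_le_Qbar (A : Set PathSpace) (hA : A ⊆ OmegaQV) : Pbar A ≤ Qbar A := by
  rw [Qbar]
  refine le_sInf fun l hl => ?_
  obtain ⟨lam, hlam, rfl, lams, Hs, hpos, hsum, hadm, hhedge⟩ := hl
  rw [Pbar, Ebar]
  refine sInf_le ?_
  refine ⟨lam, hlam, rfl, fun n => mergeStrategy Hs n, ?_, ?_⟩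
  · -- admissibility of the merged strategies
    intro n ω t hω ht
    rw [capital_merge]
    have h1 : ∑ k ∈ Finset.range (n + 1), lams k ≤ lam :=
      sum_le_hasSum (Finset.range (n + 1)) (fun k _ => (hpos k).le) hsum
    have h2 : ∑ k ∈ Finset.range (n + 1), (-(lams k))
        ≤ ∑ k ∈ Finset.range (n + 1), capital (Hs k) t ω :=
      Finset.sum_le_sum fun k _ => hadm k ω t hω ht
    rw [Finset.sum_neg_distrib] at h2
    linarith
  · -- the super-hedging property
    intro ω hω
    -- the capital of the merged strategies is uniformly bounded below for `t ≥ 0`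
    have hnn : ∀ t, 0 ≤ t → ∀ n : ℕ,
        (0:ℝ) ≤ lam + capital (mergeStrategy Hs n) t ω := by
      intro t ht n
      rw [capital_merge]
      have h1 : ∑ k ∈ Finset.range (n + 1), lams k ≤ lam :=
        sum_le_hasSum (Finset.range (n + 1)) (fun k _ => (hpos k).le) hsum
      have h2 : ∑ k ∈ Finset.range (n + 1), (-(lams k))
          ≤ ∑ k ∈ Finset.range (n + 1), capital (Hs k) t ω :=
        Finset.sum_le_sum fun k _ => hadm k ω t hω ht
      rw [Finset.sum_neg_distrib] at h2
      linarith
    have hL0 : ∀ t, 0 ≤ t → (0:EReal) ≤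
        liminf (fun n : ℕ => ((lam + capital (mergeStrategy Hs n) t ω : ℝ) : EReal)) atTop := by
      intro t ht
      refine le_liminf_of_le (by isBoundedDefault) ?_
      exact Filter.Eventually.of_forall fun n => by
        exact_mod_cast hnn t ht n
    by_cases hωA : ω ∈ A
    · -- `ω ∈ A` : use the super-hedging property of the Vovk-type strategies
      have hQ : (1:ℝ≥0∞) ≤ liminf (fun t : ℝ =>
          ∑' k, ENNReal.ofReal (lams k + capital (Hs k) t ω)) atTop := by
        have := hhedge ω hω
        rwa [Set.indicator_of_mem hωA] at this
      rw [Set.indicator_of_mem hωA]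
      -- it suffices to dominate every real `r < 1`
      by_contra hcon
      push_neg at hcon
      obtain ⟨r, hr1, hr2⟩ := EReal.exists_between_coe_real hcon
      refine absurd hr1 (not_lt.2 ?_)
      rcases lt_or_ge r 0 with hrneg | hrpos
      · -- negative `r` : use nonnegativity
        refine le_trans ?_ (le_liminf_of_le (by isBoundedDefault)
          ((eventually_ge_atTop (0:ℝ)).mono fun t ht => hL0 t ht))
        exact_mod_cast hrneg.le
      · -- `0 ≤ r < 1`
        have hr2' : (r:EReal) < ((1:ℝ):EReal) := by exact_mod_cast hr2
        have hrlt1 : r < 1 := by exact_mod_cast hr2'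
        have hofr : ENNReal.ofReal r < 1 := ENNReal.ofReal_lt_one.2 hrlt1
        have hev : ∀ᶠ t : ℝ in atTop, ENNReal.ofReal r <
            ∑' k, ENNReal.ofReal (lams k + capital (Hs k) t ω) :=
          eventually_lt_of_lt_liminf (lt_of_lt_of_le hofr hQ)
        refine le_liminf_of_le (by isBoundedDefault) ?_
        filter_upwards [hev, eventually_ge_atTop (0:ℝ)] with t hSt ht0
        -- show `r ≤ liminf_n (lam + capital (merged n) t ω)`
        have ha : ∀ k, 0 ≤ lams k + capital (Hs k) t ω := by
          intro k
          have := hadm k ω t hω ht0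
          linarith
        have htend := ENNReal.tendsto_nat_tsum
          (fun k => ENNReal.ofReal (lams k + capital (Hs k) t ω))
        have hev2 : ∀ᶠ m : ℕ in atTop, ENNReal.ofReal r <
            ∑ k ∈ Finset.range m, ENNReal.ofReal (lams k + capital (Hs k) t ω) :=
          htend.eventually_const_lt hSt
        obtain ⟨M, hM⟩ := hev2.exists_forall_of_atTop
        refine le_liminf_of_le (by isBoundedDefault) ?_
        filter_upwards [eventually_ge_atTop M] with n hn
        have hMn := hM (n + 1) (by omega)
        rw [← ENNReal.ofReal_sum_of_nonneg (fun k _ => ha k)] at hMn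
        have hsumlt : r < ∑ k ∈ Finset.range (n + 1), (lams k + capital (Hs k) t ω) :=
          (ENNReal.ofReal_lt_ofReal_iff_of_nonneg hrpos).1 hMn
        have h1 : ∑ k ∈ Finset.range (n + 1), lams k ≤ lam :=
          sum_le_hasSum (Finset.range (n + 1)) (fun k _ => (hpos k).le) hsum
        rw [Finset.sum_add_distrib] at hsumlt
        have : r ≤ lam + capital (mergeStrategy Hs n) t ω := by
          rw [capital_merge]
          linarith
        exact_mod_cast this
    · -- `ω ∉ A` : the indicator vanishes and the liminf is nonnegative
      rw [Set.indicator_of_notMem hωA]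
      refine le_liminf_of_le (by isBoundedDefault) ?_
      exact (eventually_ge_atTop (0:ℝ)).mono fun t ht => hL0 t ht

end RF
end
end

section
/- If a continuous function and a continuous nondecreasing function share their intervals of constancy, then the function takes the same value at the two associated hitting times of each level: Let ω: [0,∞) → ℝ be continuous and A: [0,∞) → [0,∞) be continuous, nondecreasing with A(0) = 0, and assume that for all u < v, A is constant on [u,v] if and only if ω is constant on [u,v]. Then for every t with t < sup_{s≥0} A(s), one has ω(inf{s ≥ 0 : A(s) ≥ t}) = ω(inf{s ≥ 0 : A(s) > t}). -/
open MeasureTheory ProbabilityTheory Filter Topology Set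
open scoped ENNReal NNReal Classical

noncomputable section

namespace RF

/-- **Equality at the two hitting times**: if a continuous `ω : [0,∞) → ℝ` and a
continuous nondecreasing `A : [0,∞) → [0,∞)` with `A 0 = 0` have the same intervals of
constancy, then for every level `t` below the supremum of `A`, the values of `ω` at the
first time `A ≥ t` and at the first time `A > t` coincide. -/
theorem hittingTimes_eq_of_sameConstancy (ω A : ℝ → ℝ)
    (hω : ContinuousOn ω (Ici 0)) (hA : ContinuousOn A (Ici 0))
    (hmono : MonotoneOn A (Ici 0)) (hA0 : A 0 = 0) (hApos : ∀ s, 0 ≤ s → 0 ≤ A s)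
    (hconst : ∀ u v, 0 ≤ u → u < v →
      ((∀ x ∈ Icc u v, A x = A u) ↔ ∀ x ∈ Icc u v, ω x = ω u))
    (t : ℝ) (ht : ∃ s, 0 ≤ s ∧ t < A s) :
    ω (sInf {s | 0 ≤ s ∧ t ≤ A s}) = ω (sInf {s | 0 ≤ s ∧ t < A s}) := by
  set S₁ := {s | 0 ≤ s ∧ t ≤ A s} with hS₁def
  set S₂ := {s | 0 ≤ s ∧ t < A s} with hS₂def
  obtain ⟨s₀, hs₀, hts₀⟩ := ht
  have hne₂ : S₂.Nonempty := ⟨s₀, hs₀, hts₀⟩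
  have hne₁ : S₁.Nonempty := ⟨s₀, hs₀, hts₀.le⟩
  have hbd₁ : BddBelow S₁ := ⟨0, fun x hx => hx.1⟩
  have hbd₂ : BddBelow S₂ := ⟨0, fun x hx => hx.1⟩
  set r := sInf S₁ with hrdef
  set R := sInf S₂ with hRdef
  have hrR : r ≤ R := csInf_le_csInf hbd₁ hne₂ (fun x hx => ⟨hx.1, hx.2.le⟩)
  rcases eq_or_lt_of_le hrR with h | h
  · rw [h]
  have hS₁closed : IsClosed S₁ := by
    have : S₁ = Ici 0 ∩ A ⁻¹' Ici t := by
      ext x; simp [hS₁def, and_comm]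
    rw [this]
    exact hA.preimage_isClosed_of_isClosed isClosed_Ici isClosed_Ici
  have hrmem : r ∈ S₁ := hS₁closed.csInf_mem hne₁ hbd₁
  have hr0 : 0 ≤ r := hrmem.1
  have hArt : t ≤ A r := hrmem.2
  have hR0 : 0 ≤ R := hr0.trans hrR
  have hle : ∀ x, 0 ≤ x → x < R → A x ≤ t := by
    intro x hx hxR
    by_contra hlt
    exact absurd (csInf_le hbd₂ ⟨hx, not_le.1 hlt⟩) (not_le.2 hxR)
  have hAr : A r = t := le_antisymm (hle r hr0 h) hArt
  have hAR : A R ≤ t := by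
    haveI hne : (𝓝[Ico r R] R).NeBot := by
      refine mem_closure_iff_nhdsWithin_neBot.1 ?_
      rw [closure_Ico h.ne]
      exact right_mem_Icc.2 h.le
    have hc : ContinuousWithinAt A (Ico r R) R :=
      (hA R hR0).mono (fun x hx => hr0.trans hx.1)
    exact le_of_tendsto hc
      (eventually_mem_nhdsWithin.mono fun x hx => hle x (hr0.trans hx.1) hx.2)
  have hconstA : ∀ x ∈ Icc r R, A x = A r := by
    intro x hx
    rw [hAr]
    refine le_antisymm ?_ (hArt.trans (hmono hr0 (hr0.trans hx.1) hx.1))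
    exact (hmono (hr0.trans hx.1) hR0 hx.2).trans hAR
  exact (((hconst r R hr0 h).1 hconstA) R ⟨hrR, le_rfl⟩).symm

end RF
end
end
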